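/- arXiv:0901.2098 — 3 statements merged into one kernel-verified Lean document; each statement's English description precedes it below -/
import Mathlib

section
/- Let R be a commutative ring of prime characteristic p with a Frobenius splitting σ : R → R, and let I ⊆ R be an ideal that is compatibly split, i.e., σ(I) ⊆ I. Then I is a radical ideal. -/
theorem apply_pow_eq_self_of_map_pow_mul {R : Type*} [Monoid R] {p : ℕ} {σ : R → R}
    (hlin : ∀ a b : R, σ (a ^ p * b) = a * σ b) (hone : σ 1 = 1) (x : R) :
    σ (x ^ p) = x := by
  simpa [hone] using hlin x 1

theorem compatibly_split_ideal_isRadical_general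
    {R : Type*} [CommRing R] (p : ℕ) [Fact p.Prime]
    (σ : R → R)
    (hlin : ∀ a b : R, σ (a ^ p * b) = a * σ b)
    (hone : σ 1 = 1)
    (I : Ideal R) (hI : ∀ x ∈ I, σ x ∈ I) :
    I.radical = I := by
  refine Ideal.radical_eq_iff.mpr <|
    (Ideal.isRadical_iff_pow_one_lt p (Fact.out : p.Prime).one_lt).mpr fun x hx => ?_
  simpa [apply_pow_eq_self_of_map_pow_mul hlin hone x] using hI _ hx

/-- A compatibly split ideal under a Frobenius splitting is radical. -/
theorem compatibly_split_ideal_isRadical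
    {R : Type*} [CommRing R] (p : ℕ) [Fact p.Prime] [CharP R p]
    (σ : R → R)
    (hadd : ∀ a b : R, σ (a + b) = σ a + σ b)
    (hlin : ∀ a b : R, σ (a ^ p * b) = a * σ b)
    (hone : σ 1 = 1)
    (I : Ideal R) (hI : ∀ x ∈ I, σ x ∈ I) :
    I.radical = I :=
  compatibly_split_ideal_isRadical_general p σ hlin hone I hI
end

section
/- Let R be a commutative ring of prime characteristic p with a Frobenius splitting σ, and let I be a compatibly split ideal. Then every minimal prime ideal over I is also compatibly split under σ. -/
/-!
If `P` is minimal over `I` and `x ∈ P`, then `s * x ^ n ∈ I` for some `s ∉ P` and some `n`: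
otherwise a prime containing `I` and avoiding both `P.primeCompl` and the powers of `x` would sit
strictly below `P`. A compatibly split ideal is radical, because `a ^ p ∈ I` gives
`a = σ (a ^ p * 1) ∈ I`; hence even `s * x ∈ I`, and then `s * σ x = σ (s ^ p * x) ∈ I ⊆ P`
forces `σ x ∈ P`.
-/

namespace Ideal

variable {R : Type*} [CommSemiring R] {I P : Ideal R}

theorem exists_mul_pow_mem_of_mem_minimalPrimes (hP : P ∈ I.minimalPrimes) {x : R}
    (hx : x ∈ P) : ∃ s ∉ P, ∃ n : ℕ, s * x ^ n ∈ I := by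
  have : P.IsPrime := hP.isPrime
  by_contra! h
  obtain ⟨Q, hQ, hIQ, hQT⟩ :=
    I.exists_le_prime_disjoint (P.primeCompl ⊔ Submonoid.powers x) <| by
      rw [Set.disjoint_right]
      rintro _ hT hI
      obtain ⟨s, hs, _, ⟨n, rfl⟩, rfl⟩ := Submonoid.mem_sup.mp hT
      exact h s hs n hI
  have hQP : Q ≤ P := fun q hq => by_contra fun hqP =>
    Set.disjoint_left.mp hQT hq (Submonoid.mem_sup_left (show q ∈ P.primeCompl from hqP))
  have hxQ : x ∉ Q := fun hxQ =>
    Set.disjoint_left.mp hQT hxQ (Submonoid.mem_sup_right (Submonoid.mem_powers x))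
  exact hxQ (hP.2 ⟨hQ, hIQ⟩ hQP hx)

theorem IsRadical.exists_mul_mem_of_mem_minimalPrimes (hI : I.IsRadical)
    (hP : P ∈ I.minimalPrimes) {x : R} (hx : x ∈ P) : ∃ s ∉ P, s * x ∈ I := by
  obtain ⟨s, hs, n, hsx⟩ := exists_mul_pow_mem_of_mem_minimalPrimes hP hx
  refine ⟨s, hs, hI ⟨n + 1, ?_⟩⟩
  rw [mul_pow, pow_succ, pow_succ', mul_mul_mul_comm]
  exact I.mul_mem_left _ hsx

variable {p : ℕ} {σ : R → R}

theorem mem_of_pow_mem_of_compatiblySplit (hlin : ∀ a b : R, σ (a ^ p * b) = a * σ b)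
    (hone : σ 1 = 1) (hI : ∀ x ∈ I, σ x ∈ I) {a : R} (ha : a ^ p ∈ I) : a ∈ I := by
  have h := hI (a ^ p * 1) (by rwa [mul_one])
  rwa [hlin, hone, mul_one] at h

theorem isRadical_of_compatiblySplit (hp : 1 < p) (hlin : ∀ a b : R, σ (a ^ p * b) = a * σ b)
    (hone : σ 1 = 1) (hI : ∀ x ∈ I, σ x ∈ I) : I.IsRadical := by
  have mem_of_pow_pow_mem : ∀ e : ℕ, ∀ a : R, a ^ p ^ e ∈ I → a ∈ I := by
    intro e
    induction e with
    | zero => simp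
    | succ e ih =>
      intro a ha
      rw [pow_succ, pow_mul] at ha
      exact ih a (mem_of_pow_mem_of_compatiblySplit hlin hone hI ha)
  rintro a ⟨n, ha⟩
  exact mem_of_pow_pow_mem n a (I.pow_mem_of_pow_mem ha (Nat.lt_pow_self hp).le)

theorem mul_apply_mem_of_compatiblySplit (hp : 0 < p)
    (hlin : ∀ a b : R, σ (a ^ p * b) = a * σ b) (hI : ∀ x ∈ I, σ x ∈ I) {s y : R}
    (hsy : s * y ∈ I) : s * σ y ∈ I := by
  obtain ⟨k, rfl⟩ := Nat.exists_eq_add_of_lt hp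
  rw [← hlin, zero_add, pow_succ, mul_assoc]
  exact hI _ (I.mul_mem_left _ hsy)

end Ideal

theorem minimalPrimes_compatibly_split_general
    {R : Type*} [CommRing R] (p : ℕ) [Fact p.Prime]
    (σ : R → R)
    (hlin : ∀ a b : R, σ (a ^ p * b) = a * σ b)
    (hone : σ 1 = 1)
    (I : Ideal R) (hI : ∀ x ∈ I, σ x ∈ I) :
    ∀ P ∈ I.minimalPrimes, ∀ x ∈ P, σ x ∈ P := by
  intro P hP x hx
  have hp : 1 < p := (Fact.out : p.Prime).one_lt
  have hIrad : I.IsRadical := Ideal.isRadical_of_compatiblySplit hp hlin hone hI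
  obtain ⟨s, hsP, hsx⟩ := hIrad.exists_mul_mem_of_mem_minimalPrimes hP hx
  have hsσx : s * σ x ∈ P :=
    hP.le (Ideal.mul_apply_mem_of_compatiblySplit (Nat.zero_lt_of_lt hp) hlin hI hsx)
  exact (hP.isPrime.mem_or_mem hsσx).resolve_left hsP

/-- Every minimal prime over a compatibly split ideal is compatibly split. -/
theorem minimalPrimes_compatibly_split
    {R : Type*} [CommRing R] (p : ℕ) [Fact p.Prime] [CharP R p]
    (σ : R → R)
    (hadd : ∀ a b : R, σ (a + b) = σ a + σ b)
    (hlin : ∀ a b : R, σ (a ^ p * b) = a * σ b)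
    (hone : σ 1 = 1)
    (I : Ideal R) (hI : ∀ x ∈ I, σ x ∈ I) :
    ∀ P ∈ I.minimalPrimes, ∀ x ∈ P, σ x ∈ P :=
  minimalPrimes_compatibly_split_general p σ hlin hone I hI
end

section
/- Let k be a field of characteristic p > 0, let R = k[[t_1, …, t_n]] (or R = k[t_1, …, t_n]), and let σ : R → R be a Frobenius splitting such that σ((t_1 ⋯ t_n)^{p-1}) is a unit in R. Then σ does not preserve the ideal ⟨t_{m+1}, …, t_n⟩ for any m < n; that is, there exists an element f of this ideal with σ(f) ∉ ⟨t_{m+1}, …, t_n⟩. -/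
/-!
The witness is `f = (t_1⋯t_n)^(p-1)`: it lies in the ideal because `p - 1 ≥ 1` and some variable
`t_i` with `i > m` divides it, whereas `σ f` is a unit and an ideal generated by variables is proper.
-/

open MvPolynomial

namespace MvPolynomial

variable {R ι : Type*} [CommSemiring R]

theorem span_X_image_ne_top [Nontrivial R] (s : Set ι) :
    Ideal.span (X '' s : Set (MvPolynomial ι R)) ≠ ⊤ := by
  rw [Ne, Ideal.eq_top_iff_one, mem_ideal_span_X_image]
  simp

theorem prod_X_pow_mem_span_X_image [Fintype ι] {s : Set ι} (hs : s.Nonempty) {e : ℕ}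
    (he : e ≠ 0) : (∏ i, X i) ^ e ∈ Ideal.span (X '' s : Set (MvPolynomial ι R)) := by
  obtain ⟨i, hi⟩ := hs
  have hX : X i ∈ Ideal.span (X '' s : Set (MvPolynomial ι R)) :=
    Ideal.subset_span (Set.mem_image_of_mem X hi)
  exact Ideal.pow_mem_of_mem _
    (Ideal.mem_of_dvd _ (Finset.dvd_prod_of_mem _ (Finset.mem_univ i)) hX) e (Nat.pos_of_ne_zero he)

end MvPolynomial

theorem splitting_not_compatible_of_isUnit_general
    {k : Type*} [Field k] (p : ℕ) [Fact p.Prime]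
    (n m : ℕ) (hm : m < n)
    (σ : MvPolynomial (Fin n) k → MvPolynomial (Fin n) k)
    (hunit : IsUnit (σ ((∏ i : Fin n, X i) ^ (p - 1)))) :
    ∃ f ∈ Ideal.span {g : MvPolynomial (Fin n) k | ∃ i : Fin n, m ≤ (i : ℕ) ∧ g = X i},
      σ f ∉ Ideal.span {g : MvPolynomial (Fin n) k | ∃ i : Fin n, m ≤ (i : ℕ) ∧ g = X i} := by
  have hgens : {g : MvPolynomial (Fin n) k | ∃ i : Fin n, m ≤ (i : ℕ) ∧ g = X i} =
      X '' {i : Fin n | m ≤ (i : ℕ)} := by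
    ext g
    exact exists_congr fun i => and_congr_right' eq_comm
  have hp : p - 1 ≠ 0 := Nat.sub_ne_zero_of_lt (Fact.out : p.Prime).one_lt
  rw [hgens]
  exact ⟨_, prod_X_pow_mem_span_X_image ⟨⟨m, hm⟩, le_refl m⟩ hp,
    fun hmem => span_X_image_ne_top _ (Ideal.eq_top_of_isUnit_mem _ hmem hunit)⟩

/-- If a Frobenius splitting `σ` of `k[t_1,…,t_n]` is such that `σ((t_1⋯t_n)^(p-1))` is a
unit, then `σ` does not preserve the ideal generated by the last `n - m` variables
(for any `m < n`). -/
theorem splitting_not_compatible_of_isUnit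
    {k : Type*} [Field k] (p : ℕ) [Fact p.Prime] [CharP k p]
    (n m : ℕ) (hm : m < n)
    (σ : MvPolynomial (Fin n) k → MvPolynomial (Fin n) k)
    (hadd : ∀ a b, σ (a + b) = σ a + σ b)
    (hlin : ∀ a b, σ (a ^ p * b) = a * σ b)
    (hone : σ 1 = 1)
    (hunit : IsUnit (σ ((∏ i : Fin n, X i) ^ (p - 1)))) :
    ∃ f ∈ Ideal.span {g : MvPolynomial (Fin n) k | ∃ i : Fin n, m ≤ (i : ℕ) ∧ g = X i},
      σ f ∉ Ideal.span {g : MvPolynomial (Fin n) k | ∃ i : Fin n, m ≤ (i : ℕ) ∧ g = X i} :=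
  splitting_not_compatible_of_isUnit_general p n m hm σ hunit
end
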